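/- arXiv:2412.20919 — 2 statements merged into one kernel-verified Lean document; each statement's English description precedes it below -/
import Mathlib

section
/- Let a,b>0 and let Ξ := {k>0 : sin(ka)=0 or sin(kb)=0}. Define F₊(k) := tan(ka/2 − (π/2)·⌊ka/π⌋) + tan(kb/2 − (π/2)·⌊kb/π⌋) and F₋(k) := −cot(ka/2 − (π/2)·⌊ka/π⌋) − cot(kb/2 − (π/2)·⌊kb/π⌋) for k∈(0,∞)∖Ξ. Then: (i) F₊(k) ≥ 0 and F₋(k) ≤ 0 for all k∈(0,∞)∖Ξ; (ii) both F₊ and F₋ are strictly increasing on every connected component interval of (0,∞)∖Ξ; (iii) for every k₀∈Ξ one has F₊(k) → +∞ as k → k₀ from the left and F₋(k) → −∞ as k → k₀ from the right. -/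
/-!
Let `θ(x) = x/2 - (π/2)⌊x/π⌋ ∈ [0, π/2)` be `x/2` reduced modulo `π/2` (`reducedHalfAngle`).
Then `F₊(k) = tan θ(ka) + tan θ(kb)` and, as `-cot θ = tan (θ - π/2)`,
`F₋(k) = tan (θ(ka) - π/2) + tan (θ(kb) - π/2)`, which gives the signs. Between zeros of
`sin (kc)` the floor `⌊kc/π⌋` is constant, so `θ(kc)` is increasing and affine in `k` with values
in `(0, π/2)`, where `tan` is increasing. At a zero `k₀c = nπ`, `θ(kc)` tends to `π/2` from below
as `k → k₀⁻` and to `0` from above as `k → k₀⁺`: one summand of `F₊` (resp. `F₋`) blows up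
while the other keeps its sign.
-/

open Real Set Filter Topology

theorem StrictMono.tendsto_nhdsLT_nhdsLT {α β : Type*} [Preorder α] [TopologicalSpace α]
    [Preorder β] [TopologicalSpace β] {f : α → β} (hf : StrictMono f) {x : α}
    (hcont : ContinuousAt f x) : Tendsto f (𝓝[<] x) (𝓝[<] (f x)) :=
  tendsto_nhdsWithin_of_tendsto_nhds_of_eventually_within _
    (hcont.tendsto.mono_left nhdsWithin_le_nhds)
    (eventually_nhdsWithin_of_forall fun _ hy => hf hy)

theorem StrictMono.tendsto_nhdsGT_nhdsGT {α β : Type*} [Preorder α] [TopologicalSpace α]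
    [Preorder β] [TopologicalSpace β] {f : α → β} (hf : StrictMono f) {x : α}
    (hcont : ContinuousAt f x) : Tendsto f (𝓝[>] x) (𝓝[>] (f x)) :=
  tendsto_nhdsWithin_of_tendsto_nhds_of_eventually_within _
    (hcont.tendsto.mono_left nhdsWithin_le_nhds)
    (eventually_nhdsWithin_of_forall fun _ hy => hf hy)

theorem Real.tan_sub_pi_div_two (θ : ℝ) : tan (θ - π / 2) = -(cos θ / sin θ) := by
  rw [tan_eq_sin_div_cos, sin_sub_pi_div_two, cos_sub_pi_div_two, neg_div]

noncomputable def reducedHalfAngle (x : ℝ) : ℝ := x / 2 - π / 2 * ⌊x / π⌋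

theorem reducedHalfAngle_eq_of_floor_eq {x : ℝ} {n : ℤ} (h : ⌊x / π⌋ = n) :
    reducedHalfAngle x = (x - n * π) / 2 := by
  rw [reducedHalfAngle, h]; ring

theorem reducedHalfAngle_nonneg (x : ℝ) : 0 ≤ reducedHalfAngle x := by
  have := (le_div_iff₀ pi_pos).1 (Int.floor_le (x / π))
  rw [reducedHalfAngle_eq_of_floor_eq rfl]; linarith

theorem reducedHalfAngle_lt_pi_div_two (x : ℝ) : reducedHalfAngle x < π / 2 := by
  have := (div_lt_iff₀ pi_pos).1 (Int.lt_floor_add_one (x / π))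
  rw [reducedHalfAngle_eq_of_floor_eq rfl]; linarith

theorem reducedHalfAngle_pos {x : ℝ} (h : sin x ≠ 0) : 0 < reducedHalfAngle x := by
  refine (reducedHalfAngle_nonneg x).lt_of_ne fun h0 => h ?_
  rw [reducedHalfAngle_eq_of_floor_eq rfl, eq_comm, div_eq_zero_iff, sub_eq_zero] at h0
  rw [h0.resolve_right two_ne_zero]
  exact sin_int_mul_pi _

theorem floor_div_pi_eq_of_sin_ne_zero {u v : ℝ} (huv : u ≤ v)
    (h : ∀ z ∈ Icc u v, sin z ≠ 0) : ⌊u / π⌋ = ⌊v / π⌋ := by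
  refine (Int.floor_le_floor (div_le_div_of_nonneg_right huv pi_pos.le)).antisymm ?_
  by_contra! hlt
  have hu : u < ⌊v / π⌋ * π := (div_lt_iff₀ pi_pos).1 (Int.floor_lt.1 hlt)
  have hv : ⌊v / π⌋ * π ≤ v := (le_div_iff₀ pi_pos).1 (Int.floor_le _)
  exact h _ ⟨hu.le, hv⟩ (sin_int_mul_pi _)

theorem reducedHalfAngle_lt_of_sin_ne_zero {u v : ℝ} (huv : u < v)
    (h : ∀ z ∈ Icc u v, sin z ≠ 0) : reducedHalfAngle u < reducedHalfAngle v := by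
  rw [reducedHalfAngle_eq_of_floor_eq (floor_div_pi_eq_of_sin_ne_zero huv.le h),
    reducedHalfAngle_eq_of_floor_eq rfl]
  linarith

theorem tendsto_reducedHalfAngle_nhdsLT {x₀ : ℝ} (h : sin x₀ = 0) :
    Tendsto reducedHalfAngle (𝓝[<] x₀) (𝓝[<] (π / 2)) := by
  obtain ⟨n, rfl⟩ := sin_eq_zero_iff.1 h
  have hfloor : ∀ x ∈ Ioo ((n - 1 : ℤ) * π) (n * π), ⌊x / π⌋ = n - 1 := by
    intro x hx
    rw [Int.floor_eq_iff, le_div_iff₀ pi_pos, div_lt_iff₀ pi_pos]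
    push_cast at hx ⊢
    constructor <;> linarith [hx.1, hx.2]
  have hlin : Tendsto (fun x => (x - (n - 1 : ℤ) * π) / 2) (𝓝[<] (n * π)) (𝓝[<] (π / 2)) := by
    have h := StrictMono.tendsto_nhdsLT_nhdsLT (f := fun x => (x - (n - 1 : ℤ) * π) / 2)
      (x := n * π) (fun _ _ h => by linarith) (by fun_prop)
    rwa [show (n * π - (n - 1 : ℤ) * π) / 2 = π / 2 by push_cast; ring] at h
  have hlt : ((n - 1 : ℤ) : ℝ) * π < n * π := by push_cast; linarith [pi_pos]
  refine hlin.congr' ?_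
  filter_upwards [Ioo_mem_nhdsLT hlt] with x hx
  exact (reducedHalfAngle_eq_of_floor_eq (hfloor x hx)).symm

theorem tendsto_reducedHalfAngle_nhdsGT {x₀ : ℝ} (h : sin x₀ = 0) :
    Tendsto reducedHalfAngle (𝓝[>] x₀) (𝓝[>] 0) := by
  obtain ⟨n, rfl⟩ := sin_eq_zero_iff.1 h
  have hfloor : ∀ x ∈ Ioo (n * π) ((n + 1 : ℤ) * π), ⌊x / π⌋ = n := by
    intro x hx
    rw [Int.floor_eq_iff, le_div_iff₀ pi_pos, div_lt_iff₀ pi_pos]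
    push_cast at hx ⊢
    exact ⟨hx.1.le, by linarith [hx.2]⟩
  have hlin : Tendsto (fun x => (x - n * π) / 2) (𝓝[>] (n * π)) (𝓝[>] 0) := by
    have h := StrictMono.tendsto_nhdsGT_nhdsGT (f := fun x => (x - n * π) / 2)
      (x := n * π) (fun _ _ h => by linarith) (by fun_prop)
    rwa [sub_self, zero_div] at h
  have hlt : (n : ℝ) * π < ((n + 1 : ℤ) : ℝ) * π := by push_cast; linarith [pi_pos]
  refine hlin.congr' ?_
  filter_upwards [Ioo_mem_nhdsGT hlt] with x hx
  exact (reducedHalfAngle_eq_of_floor_eq (hfloor x hx)).symm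

theorem tan_reducedHalfAngle_nonneg (x : ℝ) : 0 ≤ tan (reducedHalfAngle x) :=
  tan_nonneg_of_nonneg_of_le_pi_div_two (reducedHalfAngle_nonneg x)
    (reducedHalfAngle_lt_pi_div_two x).le

theorem tan_reducedHalfAngle_sub_pi_div_two_nonpos (x : ℝ) :
    tan (reducedHalfAngle x - π / 2) ≤ 0 :=
  tan_nonpos_of_nonpos_of_neg_pi_div_two_le
    (by linarith [reducedHalfAngle_lt_pi_div_two x]) (by linarith [reducedHalfAngle_nonneg x])

section Interval

variable {c x y : ℝ}

theorem strictMonoOn_reducedHalfAngle_mul (hc : 0 < c) (h : ∀ k ∈ Ioo x y, sin (k * c) ≠ 0) :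
    StrictMonoOn (fun k => reducedHalfAngle (k * c)) (Ioo x y) := by
  intro k₁ hk₁ k₂ hk₂ hlt
  refine reducedHalfAngle_lt_of_sin_ne_zero (by gcongr) fun z hz => ?_
  rw [← div_mul_cancel₀ z hc.ne']
  exact h _ ⟨hk₁.1.trans_le ((le_div_iff₀ hc).2 hz.1), ((div_le_iff₀ hc).2 hz.2).trans_lt hk₂.2⟩

theorem strictMonoOn_tan_reducedHalfAngle_mul (hc : 0 < c)
    (h : ∀ k ∈ Ioo x y, sin (k * c) ≠ 0) :
    StrictMonoOn (fun k => tan (reducedHalfAngle (k * c))) (Ioo x y) :=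
  strictMonoOn_tan.comp (strictMonoOn_reducedHalfAngle_mul hc h) fun k _ =>
    ⟨by linarith [reducedHalfAngle_nonneg (k * c), pi_pos], reducedHalfAngle_lt_pi_div_two _⟩

theorem strictMonoOn_tan_reducedHalfAngle_mul_sub_pi_div_two (hc : 0 < c)
    (h : ∀ k ∈ Ioo x y, sin (k * c) ≠ 0) :
    StrictMonoOn (fun k => tan (reducedHalfAngle (k * c) - π / 2)) (Ioo x y) :=
  strictMonoOn_tan.comp
    (fun _ hk₁ _ hk₂ hlt => sub_lt_sub_right (strictMonoOn_reducedHalfAngle_mul hc h hk₁ hk₂ hlt) _)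
    fun k hk => ⟨by linarith [reducedHalfAngle_pos (h k hk)],
      by linarith [reducedHalfAngle_lt_pi_div_two (k * c), pi_pos]⟩

end Interval

section Singularity

variable {c k₀ : ℝ}

theorem tendsto_tan_reducedHalfAngle_mul_nhdsLT (hc : 0 < c) (h : sin (k₀ * c) = 0) :
    Tendsto (fun k => tan (reducedHalfAngle (k * c))) (𝓝[<] k₀) atTop :=
  tendsto_tan_pi_div_two.comp <| (tendsto_reducedHalfAngle_nhdsLT h).comp <|
    (strictMono_mul_right_of_pos hc).tendsto_nhdsLT_nhdsLT (continuous_mul_const c).continuousAt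

theorem tendsto_tan_reducedHalfAngle_mul_sub_pi_div_two_nhdsGT (hc : 0 < c)
    (h : sin (k₀ * c) = 0) :
    Tendsto (fun k => tan (reducedHalfAngle (k * c) - π / 2)) (𝓝[>] k₀) atBot := by
  have hsub : Tendsto (· - π / 2) (𝓝[>] 0) (𝓝[>] (-(π / 2))) := by
    simpa using StrictMono.tendsto_nhdsGT_nhdsGT (fun _ _ h => sub_lt_sub_right h (π / 2))
      (continuous_sub_right (π / 2)).continuousAt (x := (0 : ℝ))
  exact tendsto_tan_neg_pi_div_two.comp <| hsub.comp <| (tendsto_reducedHalfAngle_nhdsGT h).comp <|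
    (strictMono_mul_right_of_pos hc).tendsto_nhdsGT_nhdsGT (continuous_mul_const c).continuousAt

end Singularity

theorem stmt_3 (a b : ℝ) (ha : 0 < a) (hb : 0 < b)
    (Ξ : Set ℝ) (hΞ : Ξ = {k : ℝ | 0 < k ∧ (Real.sin (k * a) = 0 ∨ Real.sin (k * b) = 0)})
    (Fp Fm : ℝ → ℝ)
    (hFp : Fp = fun k => Real.tan (k * a / 2 - π / 2 * (⌊k * a / π⌋ : ℤ)) +
        Real.tan (k * b / 2 - π / 2 * (⌊k * b / π⌋ : ℤ)))
    (hFm : Fm = fun k =>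
        -(Real.cos (k * a / 2 - π / 2 * (⌊k * a / π⌋ : ℤ)) /
            Real.sin (k * a / 2 - π / 2 * (⌊k * a / π⌋ : ℤ))) -
          Real.cos (k * b / 2 - π / 2 * (⌊k * b / π⌋ : ℤ)) /
            Real.sin (k * b / 2 - π / 2 * (⌊k * b / π⌋ : ℤ))) :
    (∀ k ∈ Set.Ioi (0 : ℝ) \ Ξ, 0 ≤ Fp k ∧ Fm k ≤ 0) ∧
    (∀ x y : ℝ, 0 ≤ x → Set.Ioo x y ⊆ Set.Ioi (0 : ℝ) \ Ξ →
      StrictMonoOn Fp (Set.Ioo x y) ∧ StrictMonoOn Fm (Set.Ioo x y)) ∧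
    (∀ k₀ ∈ Ξ, Tendsto Fp (nhdsWithin k₀ (Set.Iio k₀)) atTop ∧
      Tendsto Fm (nhdsWithin k₀ (Set.Ioi k₀)) atBot) := by
  obtain rfl : Fp = fun k => tan (reducedHalfAngle (k * a)) + tan (reducedHalfAngle (k * b)) := hFp
  obtain rfl : Fm = fun k =>
      tan (reducedHalfAngle (k * a) - π / 2) + tan (reducedHalfAngle (k * b) - π / 2) := by
    rw [hFm]; funext k; simp only [tan_sub_pi_div_two, reducedHalfAngle]; ring
  subst hΞ
  refine ⟨fun k _ => ⟨?_, ?_⟩, fun x y _ hsub => ?_, fun k₀ ⟨_, hk₀⟩ => ?_⟩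
  · exact add_nonneg (tan_reducedHalfAngle_nonneg _) (tan_reducedHalfAngle_nonneg _)
  · exact add_nonpos (tan_reducedHalfAngle_sub_pi_div_two_nonpos _)
      (tan_reducedHalfAngle_sub_pi_div_two_nonpos _)
  · have hsin : ∀ k ∈ Ioo x y, sin (k * a) ≠ 0 ∧ sin (k * b) ≠ 0 := fun k hk =>
      not_or.1 fun hs => (hsub hk).2 ⟨(hsub hk).1, hs⟩
    have hsa := fun k hk => (hsin k hk).1
    have hsb := fun k hk => (hsin k hk).2
    exact ⟨(strictMonoOn_tan_reducedHalfAngle_mul ha hsa).add_monotone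
        (strictMonoOn_tan_reducedHalfAngle_mul hb hsb).monotoneOn,
      (strictMonoOn_tan_reducedHalfAngle_mul_sub_pi_div_two ha hsa).add_monotone
        (strictMonoOn_tan_reducedHalfAngle_mul_sub_pi_div_two hb hsb).monotoneOn⟩
  · rcases hk₀ with h | h
    · exact ⟨(tendsto_tan_reducedHalfAngle_mul_nhdsLT ha h).atTop_add_nonneg
          fun _ => tan_reducedHalfAngle_nonneg _,
        (tendsto_tan_reducedHalfAngle_mul_sub_pi_div_two_nhdsGT ha h).atBot_add_nonpos
          fun _ => tan_reducedHalfAngle_sub_pi_div_two_nonpos _⟩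
    · exact ⟨Tendsto.nonneg_add_atTop (fun _ => tan_reducedHalfAngle_nonneg _)
          (tendsto_tan_reducedHalfAngle_mul_nhdsLT hb h),
        Tendsto.nonpos_add_atBot (fun _ => tan_reducedHalfAngle_sub_pi_div_two_nonpos _)
          (tendsto_tan_reducedHalfAngle_mul_sub_pi_div_two_nhdsGT hb h)⟩
end

section
/- Let a,b>0, γ,γ̃∈ℝ, and κ>0. For c∈ℝ and τ∈[−1,1] set f̂_c^τ(κ) := c·sinh(κa)/(2κ) + sinh(κ(a+b))/sinh(κb) − τ·sinh(κa)/sinh(κb), and set Ĝ(κ) := (γ̃−γ)·sinh(κa)/(2κ). Then the following are equivalent: (i) there exists τ∈[−1,1] such that either (f̂_γ^τ(κ) < −1 and f̂_{γ̃}^τ(κ) = f̂_γ^τ(κ) + √((f̂_γ^τ(κ))²−1)) or (f̂_γ^τ(κ) > 1 and f̂_{γ̃}^τ(κ) = f̂_γ^τ(κ) − √((f̂_γ^τ(κ))²−1)); (ii) either (|sinh(κ(a+b))/sinh(κb) + γ·sinh(κa)/(2κ) + √(Ĝ(κ)²+1)| ≤ sinh(κa)/sinh(κb) and Ĝ(κ)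 > 0), or (|sinh(κ(a+b))/sinh(κb) + γ·sinh(κa)/(2κ) − √(Ĝ(κ)²+1)| ≤ sinh(κa)/sinh(κb) and Ĝ(κ) < 0). -/
open Real Set

/-! For fixed κ the discriminant is affine in τ: `f̂_γ^τ = A - τ s` with `s = sinh(κa)/sinh(κb) ≥ 0`,
and `f̂_γ̃^τ = f̂_γ^τ + Ĝ`. The equation `F + Ĝ = F ± √(F² - 1)` with `∓F > 1` is solved exactly by
`F = ∓√(Ĝ² + 1)` with `±Ĝ > 0`, and such a value `A - τ s` is reached for some `τ ∈ [-1, 1]` iff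
`|A ± √(Ĝ² + 1)| ≤ s`. -/

theorem lt_neg_one_and_eq_sqrt_iff {F G : ℝ} :
    F < -1 ∧ G = √(F ^ 2 - 1) ↔ 0 < G ∧ F = -√(G ^ 2 + 1) := by
  constructor
  · rintro ⟨hF, rfl⟩
    have hF2 : 0 < F ^ 2 - 1 := by nlinarith
    refine ⟨Real.sqrt_pos.mpr hF2, ?_⟩
    rw [Real.sq_sqrt hF2.le, sub_add_cancel, Real.sqrt_sq_eq_abs, abs_of_neg (by linarith), neg_neg]
  · rintro ⟨hG, rfl⟩
    have hsq : (√(G ^ 2 + 1)) ^ 2 = G ^ 2 + 1 := Real.sq_sqrt (by positivity)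
    have hgt : 1 < √(G ^ 2 + 1) := by
      rw [Real.lt_sqrt zero_le_one]
      nlinarith
    refine ⟨by linarith, ?_⟩
    rw [neg_sq, hsq, add_sub_cancel_right, Real.sqrt_sq hG.le]

theorem one_lt_and_eq_neg_sqrt_iff {F G : ℝ} :
    1 < F ∧ G = -√(F ^ 2 - 1) ↔ G < 0 ∧ F = √(G ^ 2 + 1) := by
  have h := lt_neg_one_and_eq_sqrt_iff (F := -F) (G := -G)
  rwa [neg_lt_neg_iff, neg_sq, neg_sq, neg_pos, neg_inj, neg_eq_iff_eq_neg] at h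

theorem exists_mem_Icc_sub_mul_eq_iff {A s y : ℝ} (hs : 0 ≤ s) :
    (∃ τ ∈ Icc (-1 : ℝ) 1, A - τ * s = y) ↔ |A - y| ≤ s := by
  constructor
  · rintro ⟨τ, hτ, rfl⟩
    rw [sub_sub_cancel, abs_mul, abs_of_nonneg hs]
    exact mul_le_of_le_one_left hs (abs_le.mpr hτ)
  · intro h
    have hzero : s = 0 → A - y = 0 := fun hs0 => abs_nonpos_iff.mp (hs0 ▸ h)
    refine ⟨(A - y) / s, abs_le.mp ?_, ?_⟩
    · rw [abs_div, abs_of_nonneg hs]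
      exact div_le_one_of_le₀ h hs
    · rw [div_mul_cancel_of_imp hzero, sub_sub_cancel]

theorem stmt_10 (a b γ γ' κ : ℝ) (ha : 0 < a) (hb : 0 < b) (hκ : 0 < κ)
    (f : ℝ → ℝ → ℝ)
    (hf : f = fun c τ => c * Real.sinh (κ * a) / (2 * κ) +
        Real.sinh (κ * (a + b)) / Real.sinh (κ * b) - τ * Real.sinh (κ * a) / Real.sinh (κ * b))
    (G : ℝ) (hG : G = (γ' - γ) * Real.sinh (κ * a) / (2 * κ)) :
    (∃ τ ∈ Set.Icc (-1 : ℝ) 1,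
        (f γ τ < -1 ∧ f γ' τ = f γ τ + Real.sqrt ((f γ τ) ^ 2 - 1)) ∨
          (1 < f γ τ ∧ f γ' τ = f γ τ - Real.sqrt ((f γ τ) ^ 2 - 1))) ↔
      ((|Real.sinh (κ * (a + b)) / Real.sinh (κ * b) + γ * Real.sinh (κ * a) / (2 * κ) +
            Real.sqrt (G ^ 2 + 1)| ≤ Real.sinh (κ * a) / Real.sinh (κ * b) ∧ 0 < G) ∨
        (|Real.sinh (κ * (a + b)) / Real.sinh (κ * b) + γ * Real.sinh (κ * a) / (2 * κ) -
            Real.sqrt (G ^ 2 + 1)| ≤ Real.sinh (κ * a) / Real.sinh (κ * b) ∧ G < 0)) := by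
  set A := sinh (κ * (a + b)) / sinh (κ * b) + γ * sinh (κ * a) / (2 * κ)
  set s := sinh (κ * a) / sinh (κ * b)
  have hs : 0 ≤ s := div_nonneg (sinh_nonneg_iff.mpr (by positivity))
    (sinh_nonneg_iff.mpr (by positivity))
  have hfγ : ∀ τ, f γ τ = A - τ * s := fun τ => by subst hf; ring
  have hfγ' : ∀ τ, f γ' τ = f γ τ + G := fun τ => by subst hf hG; ring
  simp_rw [hfγ', sub_eq_add_neg (f γ _) (√_), add_right_inj, lt_neg_one_and_eq_sqrt_iff,
    one_lt_and_eq_neg_sqrt_iff, hfγ]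
  rw [← sub_neg_eq_add A, ← exists_mem_Icc_sub_mul_eq_iff hs, ← exists_mem_Icc_sub_mul_eq_iff hs]
  aesop
end
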